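/- Let G be a finite p-group, k a field of characteristic p > 0, and m ≥ 0 an integer. Let M be a finite-dimensional kG-module and Q a finitely generated free kG-module. If M ⊕ Q admits a finite permutation resolution that is free up to degree m, then M itself admits a finite permutation resolution that is free up to degree m. -/

import Mathlib

open CategoryTheory

def IsPermutationModule (k G : Type) [Field k] [Group G]
    (P : Type) [AddCommGroup P] [Module (MonoidAlgebra k G) P] : Prop :=
  ∃ (X : Type) (_ : Fintype X) (m : MulAction G X),
    Nonempty (P ≃ₗ[MonoidAlgebra k G] (@Representation.ofMulAction k _ G _ X m).asModule)

def HasPermResFreeUpTo (k G : Type) [Field k] [Group G] (m : ℕ)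
    (M : Type) [AddCommGroup M] [Module (MonoidAlgebra k G) M] : Prop :=
  ∃ (n : ℕ) (P : ℕ → ModuleCat (MonoidAlgebra k G))
    (d : ∀ i, P (i + 1) ⟶ P i) (ε : P 0 ⟶ ModuleCat.of (MonoidAlgebra k G) M),
    (∀ i, IsPermutationModule k G (P i)) ∧
    (∀ i ≤ m, Module.Free (MonoidAlgebra k G) (P i)) ∧
    (∀ i, n < i → Subsingleton (P i)) ∧
    Function.Surjective ε ∧
    Function.Exact (d 0) ε ∧
    ∀ i, Function.Exact (d (i + 1)) (d i)

def HasFinitePermRes (k G : Type) [Field k] [Group G]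
    (M : Type) [AddCommGroup M] [Module (MonoidAlgebra k G) M] : Prop :=
  ∃ (n : ℕ) (P : ℕ → ModuleCat (MonoidAlgebra k G))
    (d : ∀ i, P (i + 1) ⟶ P i) (ε : P 0 ⟶ ModuleCat.of (MonoidAlgebra k G) M),
    (∀ i, IsPermutationModule k G (P i)) ∧
    (∀ i, n < i → Subsingleton (P i)) ∧
    Function.Surjective ε ∧
    Function.Exact (d 0) ε ∧
    ∀ i, Function.Exact (d (i + 1)) (d i)

def HasGoodPermRes (k G : Type) [Field k] [Group G]
    (M : Type) [AddCommGroup M] [Module (MonoidAlgebra k G) M] : Prop :=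
  ∀ m : ℕ, HasPermResFreeUpTo k G m M

/-!
Since `Q` is projective, the inclusion `Q → M × Q` lifts through the augmentation
`ε : P₀ → M × Q` to some `σ : Q → P₀`. Splicing `Q` into degree one gives the resolution
`⋯ → P₂ → P₁ × Q → P₀ → M` with differentials `(d₁, 0)` and `[d₀, σ]` and augmentation
`pr_M ∘ ε`. It is again a finite permutation resolution, free in the same degrees, because a
finitely generated free `kG`-module `kG^ι` is the permutation module `k[ι × G]`.
-/

namespace Representation

section

variable {k G V W : Type*} [CommSemiring k] [Monoid G] [AddCommMonoid V] [Module k V]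
  [AddCommMonoid W] [Module k W]

noncomputable def Equiv.asModuleEquiv {ρ : Representation k G V} {σ : Representation k G W}
    (φ : ρ.Equiv σ) : ρ.asModule ≃ₗ[MonoidAlgebra k G] σ.asModule :=
  .ofBijective (IntertwiningMap.equivLinearMapAsModule ρ σ φ.toIntertwiningMap)
    φ.toLinearEquiv.bijective

theorem asAlgebraHom_prod (ρ : Representation k G V) (σ : Representation k G W)
    (r : MonoidAlgebra k G) :
    asAlgebraHom (ρ.prod σ) r = (asAlgebraHom ρ r).prodMap (asAlgebraHom σ r) := by
  induction r using MonoidAlgebra.induction_linear with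
  | zero => ext <;> simp
  | add r s hr hs => ext <;> simp_all
  | single g a => ext <;> simp [asAlgebraHom_single]

noncomputable def prodAsModuleEquiv (ρ : Representation k G V) (σ : Representation k G W) :
    (ρ.prod σ).asModule ≃ₗ[MonoidAlgebra k G] ρ.asModule × σ.asModule where
  toFun := id
  invFun := id
  map_add' _ _ := rfl
  map_smul' r v := congr($(asAlgebraHom_prod ρ σ r) v)
  left_inv _ := rfl
  right_inv _ := rfl

end

variable (k G : Type*) [CommSemiring k] [Monoid G]

noncomputable def ofMulActionSumEquiv (X Y : Type*) [MulAction G X] [MulAction G Y] :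
    (ofMulAction k G (X ⊕ Y)).Equiv ((ofMulAction k G X).prod (ofMulAction k G Y)) :=
  .mk (MonoidAlgebra.coeffLinearEquiv k ≪≫ₗ Finsupp.sumFinsuppLEquivProdFinsupp k ≪≫ₗ
      (MonoidAlgebra.coeffLinearEquiv k).symm.prodCongr (MonoidAlgebra.coeffLinearEquiv k).symm)
    fun g ↦ MonoidAlgebra.lhom_ext' fun z ↦ LinearMap.ext_ring <| by
      cases z <;> simp [MonoidAlgebra.coeffLinearEquiv, Finsupp.sumFinsuppLEquivProdFinsupp]

noncomputable def finsuppLinearEquivSigma (α : Type*) [Fintype α] :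
    (α →₀ MonoidAlgebra k G) ≃ₗ[k] MonoidAlgebra k (Σ _ : α, G) :=
  Finsupp.mapRange.linearEquiv (MonoidAlgebra.coeffLinearEquiv k) ≪≫ₗ
    Finsupp.linearEquivFunOnFinite k _ α ≪≫ₗ (Finsupp.sigmaFinsuppLEquivPiFinsupp k).symm ≪≫ₗ
    (MonoidAlgebra.coeffLinearEquiv k).symm

theorem finsuppLinearEquivSigma_single_single {α : Type*} [Fintype α] (i : α) (g : G) (r : k) :
    finsuppLinearEquivSigma k G α (.single i (.single g r)) = .single ⟨i, g⟩ r := by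
  classical
  apply MonoidAlgebra.coeff_injective
  ext ⟨j, h⟩
  by_cases hij : i = j
  · subst hij
    simp [finsuppLinearEquivSigma, MonoidAlgebra.coeff_single, Finsupp.single_apply]
  · simp [finsuppLinearEquivSigma, MonoidAlgebra.coeff_single, Ne.symm hij]

noncomputable def freeEquivOfMulActionSigma (α : Type*) [Fintype α] :
    (free k G α).Equiv (ofMulAction k G (Σ _ : α, G)) :=
  .mk (finsuppLinearEquivSigma k G α) fun g ↦
    Finsupp.lhom_ext' fun i ↦ MonoidAlgebra.lhom_ext' fun h ↦ LinearMap.ext_ring <| by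
      simp [finsuppLinearEquivSigma_single_single]

end Representation

namespace IsPermutationModule

variable {k G : Type} [Field k] [Group G]
  {A B : Type} [AddCommGroup A] [Module (MonoidAlgebra k G) A]
  [AddCommGroup B] [Module (MonoidAlgebra k G) B]

theorem prod (hA : IsPermutationModule k G A) (hB : IsPermutationModule k G B) :
    IsPermutationModule k G (A × B) := by
  obtain ⟨X, _, _, ⟨eA⟩⟩ := hA
  obtain ⟨Y, _, _, ⟨eB⟩⟩ := hB
  exact ⟨X ⊕ Y, inferInstance, inferInstance, ⟨eA.prodCongr eB ≪≫ₗ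
    (Representation.prodAsModuleEquiv _ _).symm ≪≫ₗ
    (Representation.ofMulActionSumEquiv k G X Y).asModuleEquiv.symm⟩⟩

theorem of_free [Finite G] [Module.Finite (MonoidAlgebra k G) A]
    [Module.Free (MonoidAlgebra k G) A] : IsPermutationModule k G A := by
  have := Fintype.ofFinite G
  let ι := Module.Free.ChooseBasisIndex (MonoidAlgebra k G) A
  exact ⟨Σ _ : ι, G, inferInstance, inferInstance,
    ⟨(Module.Free.chooseBasis _ A).repr ≪≫ₗ Representation.finsuppLEquivFreeAsModule k G ι ≪≫ₗ
      (Representation.freeEquivOfMulActionSigma k G ι).asModuleEquiv⟩⟩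

end IsPermutationModule

section Splice

variable {R P₀ P₁ P₂ P₃ M Q : Type*} [Ring R]
  [AddCommGroup P₀] [Module R P₀] [AddCommGroup P₁] [Module R P₁]
  [AddCommGroup P₂] [Module R P₂] [AddCommGroup P₃] [Module R P₃]
  [AddCommGroup M] [Module R M] [AddCommGroup Q] [Module R Q]
  {d₀ : P₁ →ₗ[R] P₀} {ε : P₀ →ₗ[R] M × Q} {σ : Q →ₗ[R] P₀}

theorem exact_coprod_fst_comp (hε : Function.Exact d₀ ε) (hσ : ε ∘ₗ σ = LinearMap.inr R M Q) :
    Function.Exact (d₀.coprod σ) (LinearMap.fst R M Q ∘ₗ ε) := by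
  have hεσ (q : Q) : ε (σ q) = (0, q) := LinearMap.congr_fun hσ q
  intro y
  constructor
  · intro hy
    have hy' : ε (y - σ (ε y).2) = 0 := by
      rw [map_sub, hεσ]
      exact Prod.ext (by simpa using hy) (by simp)
    obtain ⟨x, hx⟩ := (hε _).mp hy'
    exact ⟨(x, (ε y).2), by simp [hx]⟩
  · rintro ⟨⟨x, q⟩, rfl⟩
    simp [hε.apply_apply_eq_zero, hεσ]

theorem exact_prod_zero_coprod {d₁ : P₂ →ₗ[R] P₁} (hd : Function.Exact d₁ d₀)
    (hε : ε ∘ₗ d₀ = 0) (hσ : ε ∘ₗ σ = LinearMap.inr R M Q) :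
    Function.Exact (d₁.prod (0 : P₂ →ₗ[R] Q)) (d₀.coprod σ) := by
  have hεd (y : P₁) : ε (d₀ y) = 0 := LinearMap.congr_fun hε y
  have hεσ (q : Q) : ε (σ q) = (0, q) := LinearMap.congr_fun hσ q
  intro ⟨y, q⟩
  constructor
  · intro hy
    have hq : q = 0 := by simpa [hεd, hεσ] using congr((ε $hy).2)
    subst hq
    obtain ⟨x, hx⟩ := (hd y).mp (by simpa using hy)
    exact ⟨x, by simp [hx]⟩
  · rintro ⟨x, hx⟩
    rw [← hx]
    simp [hd.apply_apply_eq_zero]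

theorem Function.Exact.prod_zero {d₁ : P₂ →ₗ[R] P₁} {d₂ : P₃ →ₗ[R] P₂}
    (hd : Function.Exact d₂ d₁) : Function.Exact d₂ (d₁.prod (0 : P₂ →ₗ[R] Q)) := by
  rw [LinearMap.exact_iff] at hd ⊢
  rw [LinearMap.ker_prod, LinearMap.ker_zero, inf_top_eq, hd]

end Splice

theorem hasPermResFreeUpTo_of_prod_free_general
    (k : Type) [Field k]
    (G : Type) [Group G] [Finite G] (m : ℕ)
    (M Q : Type)
    [AddCommGroup M] [Module (MonoidAlgebra k G) M]
    [AddCommGroup Q] [Module (MonoidAlgebra k G) Q] [Module.Finite (MonoidAlgebra k G) Q]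
    [Module.Free (MonoidAlgebra k G) Q]
    (h : HasPermResFreeUpTo k G m (M × Q)) :
    HasPermResFreeUpTo k G m M := by
  obtain ⟨n, P, d, ε, hperm, hfree, hsub, hsurj, hex0, hex⟩ := h
  obtain ⟨σ, hσ⟩ := Module.projective_lifting_property ε.hom (LinearMap.inr _ M Q) hsurj
  refine ⟨max n 1,
    fun | 0 => P 0 | 1 => ModuleCat.of (MonoidAlgebra k G) (P 1 × Q) | j + 2 => P (j + 2),
    fun i => match i with
      | 0 => ModuleCat.ofHom ((d 0).hom.coprod σ)
      | 1 => ModuleCat.ofHom ((d 1).hom.prod 0)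
      | j + 2 => d (j + 2),
    ModuleCat.ofHom (LinearMap.fst _ M Q ∘ₗ ε.hom), ?_, ?_, ?_, ?_, ?_, ?_⟩
  · rintro (_ | _ | j)
    exacts [hperm 0, (hperm 1).prod .of_free, hperm _]
  · rintro (_ | _ | j) hi
    exacts [hfree 0 hi, have := hfree 1 hi; inferInstanceAs (Module.Free _ (P 1 × Q)), hfree _ hi]
  · rintro (_ | _ | j) hi
    exacts [absurd hi (by omega), absurd hi (by omega), hsub _ (by omega)]
  · exact Prod.fst_surjective.comp hsurj
  · exact exact_coprod_fst_comp hex0 hσ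
  · rintro (_ | _ | j)
    exacts [exact_prod_zero_coprod (hex 0) hex0.linearMap_comp_eq_zero hσ,
      (hex 1).prod_zero, hex _]

/-- If `M ⊕ Q` (with `Q` finitely generated free) has a finite permutation resolution
that is free up to degree `m`, then so does `M`. -/
theorem hasPermResFreeUpTo_of_prod_free
    (p : ℕ) (hp : p.Prime) (k : Type) [Field k] [CharP k p]
    (G : Type) [Group G] [Finite G] (hG : IsPGroup p G) (m : ℕ)
    (M Q : Type)
    [AddCommGroup M] [Module (MonoidAlgebra k G) M] [Module.Finite (MonoidAlgebra k G) M]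
    [AddCommGroup Q] [Module (MonoidAlgebra k G) Q] [Module.Finite (MonoidAlgebra k G) Q]
    [Module.Free (MonoidAlgebra k G) Q]
    (h : HasPermResFreeUpTo k G m (M × Q)) :
    HasPermResFreeUpTo k G m M :=
  hasPermResFreeUpTo_of_prod_free_general k G m M Q h
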